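/- arXiv:1912.01538 — 3 statements merged into one kernel-verified Lean document; each statement's English description precedes it below -/
import Mathlib

section
/- The polar dual of the pyramid P satisfies P* = conv{(0,0,−1),(−2,0,1),(0,−2,1),(2,−2,1),(2,2,1),(−2,2,1)}; in particular P* is the convex hull of finitely many lattice points, i.e. P is a reflexive polytope. -/
/-! Since `P` is the convex hull of its six vertices, `P*` is cut out by the six inequalities
`⟨v, y⟩ ≥ -1`, `v` a vertex of `P`. They describe the pyramid with apex `(0,0,-1)` over the pentagon
at height `1` spanned by the other five listed points: each listed point satisfies them, and
conversely every solution is an explicit convex combination of the apex and one of the three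
triangles of a fan triangulation of the pentagon. -/

/-- The polar dual of a subset `Q ⊆ ℝⁿ`:
`Q* = {y : ⟨x, y⟩ ≥ −1 for all x ∈ Q}`, with the standard dot product. -/
def polarDual {n : ℕ} (Q : Set (Fin n → ℝ)) : Set (Fin n → ℝ) :=
  {y | ∀ x ∈ Q, -1 ≤ ∑ i, x i * y i}

/-- The pyramid `P = conv{(1,0,1),(1,1,1),(0,1,1),(−1,0,1),(0,−1,1),(0,0,−1)}`,
associated to the projective cone over the anticanonically embedded `dP₇`. -/
noncomputable def P : Set (Fin 3 → ℝ) :=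
  convexHull ℝ
    ({![1, 0, 1], ![1, 1, 1], ![0, 1, 1], ![-1, 0, 1], ![0, -1, 1], ![0, 0, -1]} :
      Set (Fin 3 → ℝ))

section PolarDual

variable {n : ℕ}

theorem mem_polarDual_iff {Q : Set (Fin n → ℝ)} {y : Fin n → ℝ} :
    y ∈ polarDual Q ↔ ∀ x ∈ Q, -1 ≤ x ⬝ᵥ y :=
  Iff.rfl

theorem convex_polarDual (Q : Set (Fin n → ℝ)) : Convex ℝ (polarDual Q) := by
  have : polarDual Q = ⋂ x ∈ Q, {y | -1 ≤ x ⬝ᵥ y} := by ext; simp [mem_polarDual_iff]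
  rw [this]
  exact convex_iInter₂ fun x _ ↦
    convex_halfSpace_ge ⟨dotProduct_add x, fun c y ↦ dotProduct_smul c x y⟩ (-1)

theorem polarDual_convexHull (S : Set (Fin n → ℝ)) :
    polarDual (convexHull ℝ S) = polarDual S := by
  ext y
  refine ⟨fun hy x hx ↦ hy x (subset_convexHull ℝ S hx), fun hy x hx ↦ ?_⟩
  have hlin : IsLinearMap ℝ fun x : Fin n → ℝ ↦ x ⬝ᵥ y :=
    ⟨fun u v ↦ add_dotProduct u v y, fun c u ↦ smul_dotProduct c u y⟩
  exact convexHull_min hy (convex_halfSpace_ge hlin (-1)) hx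

end PolarDual

theorem add_add_add_smul_mem_convexHull {E : Type*} [AddCommGroup E] [Module ℝ E] {s : Set E}
    {p q r t : E} (hp : p ∈ s) (hq : q ∈ s) (hr : r ∈ s) (ht : t ∈ s) {a b c d : ℝ}
    (ha : 0 ≤ a) (hb : 0 ≤ b) (hc : 0 ≤ c) (hd : 0 ≤ d) (habcd : a + b + c + d = 1) :
    a • p + b • q + c • r + d • t ∈ convexHull ℝ s := by
  have := (convex_convexHull ℝ s).sum_mem (t := Finset.univ) (w := ![a, b, c, d])
    (z := ![p, q, r, t]) (by intro i _; fin_cases i <;> assumption)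
    (by simpa [Fin.sum_univ_four] using habcd)
    (by intro i _; fin_cases i <;> exact subset_convexHull ℝ s ‹_›)
  simpa [Fin.sum_univ_four, add_assoc] using this

theorem mem_polarDual_P_iff {y : Fin 3 → ℝ} :
    y ∈ polarDual P ↔ -1 ≤ y 0 + y 2 ∧ -1 ≤ y 0 + y 1 + y 2 ∧ -1 ≤ y 1 + y 2 ∧
      -1 ≤ -y 0 + y 2 ∧ -1 ≤ -y 1 + y 2 ∧ y 2 ≤ 1 := by
  rw [P, polarDual_convexHull]
  simp [mem_polarDual_iff, dotProduct, Fin.sum_univ_three]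

def pyramidDualVertices : Set (Fin 3 → ℝ) :=
  {![0, 0, -1], ![-2, 0, 1], ![0, -2, 1], ![2, -2, 1], ![2, 2, 1], ![-2, 2, 1]}

theorem convexHull_pyramidDualVertices_subset :
    convexHull ℝ pyramidDualVertices ⊆ polarDual P := by
  refine convexHull_min ?_ (convex_polarDual P)
  rintro v (rfl | rfl | rfl | rfl | rfl | rfl) <;>
    norm_num [mem_polarDual_P_iff, Matrix.cons_val_two, Matrix.tail_cons]

/- The diagonals from `(2,2,1)` to `(0,-2,1)` and to `(-2,0,1)` cut the base into three triangles;
the two case distinctions ask on which side of the planes through the apex and these diagonals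
`y` lies. In each case the apex carries weight `(1 - y 2) / 2`. -/
theorem polarDual_P_subset : polarDual P ⊆ convexHull ℝ pyramidDualVertices := by
  intro y hy
  obtain ⟨h₁, h₂, h₃, h₄, h₅, h₆⟩ := mem_polarDual_P_iff.1 hy
  have hA : ![0, 0, -1] ∈ pyramidDualVertices := by simp [pyramidDualVertices]
  have hB : ![-2, 0, 1] ∈ pyramidDualVertices := by simp [pyramidDualVertices]
  have hC : ![0, -2, 1] ∈ pyramidDualVertices := by simp [pyramidDualVertices]
  have hD : ![2, -2, 1] ∈ pyramidDualVertices := by simp [pyramidDualVertices]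
  have hE : ![2, 2, 1] ∈ pyramidDualVertices := by simp [pyramidDualVertices]
  have hF : ![-2, 2, 1] ∈ pyramidDualVertices := by simp [pyramidDualVertices]
  by_cases hCDE : 1 ≤ 2 * y 0 - y 1 - y 2
  · convert add_add_add_smul_mem_convexHull hA hC hD hE (a := (1 - y 2) / 2)
      (b := (1 + y 2 - y 0) / 2) (c := (2 * y 0 - y 1 - y 2 - 1) / 4) (d := (1 + y 2 + y 1) / 4)
      (by linarith) (by linarith) (by linarith) (by linarith) (by ring) using 1
    ext i; fin_cases i <;> simp <;> ring
  by_cases hBFE : 1 ≤ 2 * y 1 - y 0 - y 2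
  · convert add_add_add_smul_mem_convexHull hA hB hF hE (a := (1 - y 2) / 2)
      (b := (1 + y 2 - y 1) / 2) (c := (2 * y 1 - y 0 - y 2 - 1) / 4) (d := (1 + y 2 + y 0) / 4)
      (by linarith) (by linarith) (by linarith) (by linarith) (by ring) using 1
    ext i; fin_cases i <;> simp <;> ring
  · convert add_add_add_smul_mem_convexHull hA hB hC hE (a := (1 - y 2) / 2)
      (b := (1 + y 2 + y 1 - 2 * y 0) / 6) (c := (1 + y 2 + y 0 - 2 * y 1) / 6)
      (d := (1 + y 2 + y 0 + y 1) / 6)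
      (by linarith) (by linarith) (by linarith) (by linarith) (by ring) using 1
    ext i; fin_cases i <;> simp <;> ring

/-- The polar dual of the pyramid `P` is
`conv{(0,0,−1),(−2,0,1),(0,−2,1),(2,−2,1),(2,2,1),(−2,2,1)}`;
in particular `P` is a reflexive polytope. -/
theorem polarDual_pyramid :
    polarDual P =
      convexHull ℝ
        ({![0, 0, -1], ![-2, 0, 1], ![0, -2, 1], ![2, -2, 1], ![2, 2, 1], ![-2, 2, 1]} :
          Set (Fin 3 → ℝ)) :=
  polarDual_P_subset.antisymm convexHull_pyramidDualVertices_subset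
end

section
/- The polar dual P* = {y ∈ ℝ³ : ⟨x, y⟩ ≥ −1 for all x ∈ P} of the pyramid P has Lebesgue volume equal to 28/3; equivalently, its normalised volume 3!·volume equals 56, which is the anticanonical degree (−K_X)³ of the projective cone X over the anticanonically embedded del Pezzo surface of degree 7. -/
open MeasureTheory

open Set

open intervalIntegral in
lemma inner1d {s : ℝ} (hs : 0 ≤ s) :
    ∫⁻ a in Icc (-s) s, ENNReal.ofReal (s - max (-s) (-s - a)) =
      ENNReal.ofReal (7 * s ^ 2 / 2) := by
  have hcont : Continuous fun a : ℝ => s - max (-s) (-s - a) :=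
    continuous_const.sub (continuous_const.max (continuous_const.sub continuous_id))
  have hnn : 0 ≤ᵐ[volume.restrict (Icc (-s) s)] fun a : ℝ => s - max (-s) (-s - a) := by
    refine (ae_restrict_iff' measurableSet_Icc).2 (ae_of_all _ fun a ha => ?_)
    obtain ⟨h1, h2⟩ := ha
    simp only [Pi.zero_apply, sub_nonneg, max_le_iff]
    constructor <;> linarith
  rw [← ofReal_integral_eq_lintegral_ofReal hcont.integrableOn_Icc hnn]
  congr 1
  rw [integral_Icc_eq_integral_Ioc, ← intervalIntegral.integral_of_le (by linarith)]
  have hsplit := intervalIntegral.integral_add_adjacent_intervals (a := -s) (b := 0) (c := s)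
    (μ := volume) (f := fun a : ℝ => s - max (-s) (-s - a))
    (hcont.intervalIntegrable _ _) (hcont.intervalIntegrable _ _)
  rw [← hsplit]
  have h1 : ∫ a in (-s)..0, (s - max (-s) (-s - a)) = ∫ a in (-s)..0, (2 * s + a) := by
    refine intervalIntegral.integral_congr fun a ha => ?_
    rw [uIcc_of_le (by linarith)] at ha
    obtain ⟨ha1, ha2⟩ := ha
    rw [max_eq_right (by linarith)]
    ring
  have h2 : ∫ a in (0:ℝ)..s, (s - max (-s) (-s - a)) = ∫ a in (0:ℝ)..s, (2 * s : ℝ) := by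
    refine intervalIntegral.integral_congr fun a ha => ?_
    rw [uIcc_of_le (by linarith)] at ha
    obtain ⟨ha1, ha2⟩ := ha
    rw [max_eq_left (by linarith)]
    ring
  rw [h1, h2]
  rw [intervalIntegral.integral_add intervalIntegrable_const intervalIntegrable_id,
    intervalIntegral.integral_const, integral_id, intervalIntegral.integral_const]
  simp
  ring

open intervalIntegral in
lemma outer1d :
    ∫⁻ t in Icc (-1 : ℝ) 1, ENNReal.ofReal (7 * (1 + t) ^ 2 / 2) =
      ENNReal.ofReal (28 / 3) := by
  have hcont : Continuous fun t : ℝ => 7 * (1 + t) ^ 2 / 2 := by continuity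
  have hnn : 0 ≤ᵐ[volume.restrict (Icc (-1 : ℝ) 1)] fun t : ℝ => 7 * (1 + t) ^ 2 / 2 :=
    ae_of_all _ fun t => by positivity
  rw [← ofReal_integral_eq_lintegral_ofReal hcont.integrableOn_Icc hnn]
  congr 1
  rw [integral_Icc_eq_integral_Ioc, ← intervalIntegral.integral_of_le (by norm_num)]
  have : ∫ t in (-1 : ℝ)..1, 7 * (1 + t) ^ 2 / 2
      = ∫ t in (-1 : ℝ)..1, (fun x : ℝ => 7 * x ^ 2 / 2) (1 + t) := rfl
  rw [this, intervalIntegral.integral_comp_add_left (fun x : ℝ => 7 * x ^ 2 / 2) 1]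
  norm_num

/-- The slice measure of the polytope. -/
lemma slice2 (t : ℝ) :
    (volume : Measure (ℝ × ℝ)) {q : ℝ × ℝ | t ≤ 1 ∧ -1 - t ≤ q.1 ∧ q.1 ≤ 1 + t ∧
        -1 - t ≤ q.2 ∧ q.2 ≤ 1 + t ∧ -(1 + t) ≤ q.1 + q.2} =
      (Icc (-1 : ℝ) 1).indicator (fun t => ENNReal.ofReal (7 * (1 + t) ^ 2 / 2)) t := by
  set C : Set (ℝ × ℝ) := {q : ℝ × ℝ | t ≤ 1 ∧ -1 - t ≤ q.1 ∧ q.1 ≤ 1 + t ∧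
        -1 - t ≤ q.2 ∧ q.2 ≤ 1 + t ∧ -(1 + t) ≤ q.1 + q.2} with hCdef
  by_cases ht : t ∈ Icc (-1 : ℝ) 1
  · obtain ⟨ht1, ht2⟩ := ht
    set s : ℝ := 1 + t with hsdef
    have hs : 0 ≤ s := by simp [hsdef]; linarith
    have hC : MeasurableSet C := by
      simp only [hCdef, setOf_and]
      exact (MeasurableSet.const _).inter
        (((measurableSet_le measurable_const measurable_fst).inter
          ((measurableSet_le measurable_fst measurable_const).inter
            ((measurableSet_le measurable_const measurable_snd).inter
              ((measurableSet_le measurable_snd measurable_const).inter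
                (measurableSet_le measurable_const (measurable_fst.add measurable_snd)))))))
    rw [Measure.volume_eq_prod, Measure.prod_apply hC]
    have hsec : ∀ a : ℝ, (volume : Measure ℝ) (Prod.mk a ⁻¹' C) =
        (Icc (-s) s).indicator (fun a => ENNReal.ofReal (s - max (-s) (-s - a))) a := by
      intro a
      by_cases ha : a ∈ Icc (-s) s
      · obtain ⟨ha1, ha2⟩ := ha
        have : Prod.mk a ⁻¹' C = Icc (max (-s) (-s - a)) s := by
          ext b
          simp only [hCdef, mem_preimage, mem_setOf_eq, mem_Icc, max_le_iff]
          constructor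
          · rintro ⟨-, -, -, hb1, hb2, hb3⟩
            refine ⟨⟨by linarith, by linarith⟩, by linarith⟩
          · rintro ⟨⟨hb1, hb2⟩, hb3⟩
            refine ⟨ht2, by linarith, by linarith, by linarith, by linarith, by linarith⟩
        rw [this, Real.volume_Icc, indicator_of_mem (mem_Icc.2 ⟨ha1, ha2⟩)]
      · have : Prod.mk a ⁻¹' C = ∅ := by
          ext b
          simp only [hCdef, mem_preimage, mem_setOf_eq, mem_empty_iff_false, iff_false, not_and]
          intro _ h1 h2
          exact absurd (mem_Icc.2 ⟨by linarith, by linarith⟩) ha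
        rw [this, measure_empty, indicator_of_notMem ha]
    simp only [hsec]
    rw [lintegral_indicator measurableSet_Icc, inner1d hs,
      indicator_of_mem (mem_Icc.2 ⟨ht1, ht2⟩)]
  · have hempty : C = ∅ := by
      ext q
      simp only [hCdef, mem_setOf_eq, mem_empty_iff_false, iff_false, not_and]
      intro h1 h2
      intro h3
      exact absurd (mem_Icc.2 ⟨by linarith, h1⟩) ht
    rw [hempty, measure_empty, indicator_of_notMem ht]

/-- The polar dual of the pyramid `P` has Lebesgue volume `28/3`, i.e. normalised
volume `3! · (28/3) = 56 = (−K_X)³` for the projective cone `X` over `dP₇`. -/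
theorem volume_polarDual_pyramid :
    volume (polarDual P) = ENNReal.ofReal (28 / 3) := by
  classical
  -- Step 1: identify the polar dual with an explicit intersection of halfspaces.
  have hPD : polarDual P = {y : Fin 3 → ℝ | y 2 ≤ 1 ∧ -1 - y 2 ≤ y 0 ∧ y 0 ≤ 1 + y 2 ∧
      -1 - y 2 ≤ y 1 ∧ y 1 ≤ 1 + y 2 ∧ -(1 + y 2) ≤ y 0 + y 1} := by
    ext y
    constructor
    · intro hy
      have h1 := hy ![1, 0, 1] (subset_convexHull ℝ _ (by left; rfl))
      have h2 := hy ![1, 1, 1] (subset_convexHull ℝ _ (by right; left; rfl))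
      have h3 := hy ![0, 1, 1] (subset_convexHull ℝ _ (by right; right; left; rfl))
      have h4 := hy ![-1, 0, 1] (subset_convexHull ℝ _ (by right; right; right; left; rfl))
      have h5 := hy ![0, -1, 1] (subset_convexHull ℝ _ (by right; right; right; right; left; rfl))
      have h6 := hy ![0, 0, -1] (subset_convexHull ℝ _
        (by right; right; right; right; right; rfl))
      simp only [Fin.sum_univ_three, Matrix.cons_val_zero, Matrix.cons_val_one, Matrix.head_cons,
        Matrix.cons_val_two, Matrix.tail_cons, one_mul, zero_mul, neg_mul, neg_one_mul,
        add_zero, zero_add] at h1 h2 h3 h4 h5 h6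
      refine ⟨by linarith, by linarith, by linarith, by linarith, by linarith, by linarith⟩
    · intro hy
      obtain ⟨h1, h2, h3, h4, h5, h6⟩ := hy
      intro x hx
      have hlin : IsLinearMap ℝ fun x : Fin 3 → ℝ => ∑ i, x i * y i := by
        constructor
        · intro u v
          simp [add_mul, Finset.sum_add_distrib]
        · intro c u
          simp [Finset.mul_sum, mul_assoc]
      refine convexHull_min ?_ (convex_halfSpace_ge hlin (-1)) hx
      intro v hv
      simp only [mem_insert_iff, mem_singleton_iff] at hv
      rcases hv with rfl | rfl | rfl | rfl | rfl | rfl <;>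
        · simp only [mem_setOf_eq, Fin.sum_univ_three, Matrix.cons_val_zero, Matrix.cons_val_one,
            Matrix.head_cons, Matrix.cons_val_two, Matrix.tail_cons, one_mul, zero_mul, neg_mul,
            neg_one_mul, add_zero, zero_add]
          linarith
  rw [hPD]
  -- Step 2: transfer to ℝ × ℝ × ℝ.
  set B : Set (ℝ × ℝ × ℝ) := {p : ℝ × ℝ × ℝ | p.1 ≤ 1 ∧ -1 - p.1 ≤ p.2.1 ∧ p.2.1 ≤ 1 + p.1 ∧
      -1 - p.1 ≤ p.2.2 ∧ p.2.2 ≤ 1 + p.1 ∧ -(1 + p.1) ≤ p.2.1 + p.2.2} with hBdef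
  have hB : MeasurableSet B := by
    have m1 : Measurable fun p : ℝ × ℝ × ℝ => p.1 := measurable_fst
    have m2 : Measurable fun p : ℝ × ℝ × ℝ => p.2.1 := measurable_snd.fst
    have m3 : Measurable fun p : ℝ × ℝ × ℝ => p.2.2 := measurable_snd.snd
    simp only [hBdef, setOf_and]
    have mlo : Measurable fun p : ℝ × ℝ × ℝ => -1 - p.1 := measurable_const.sub m1
    have mhi : Measurable fun p : ℝ × ℝ × ℝ => 1 + p.1 := measurable_const.add m1
    exact (measurableSet_le m1 measurable_const|>.inter
      ((measurableSet_le mlo m2).inter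
        ((measurableSet_le m2 mhi).inter
          ((measurableSet_le mlo m3).inter
            ((measurableSet_le m3 mhi).inter
              (measurableSet_le mhi.neg (m2.add m3)))))))
  set e : (Fin 3 → ℝ) → ℝ × ℝ × ℝ :=
    (Prod.map id ⇑(MeasurableEquiv.finTwoArrow (α := ℝ))) ∘
      ⇑(MeasurableEquiv.piFinSuccAbove (fun _ : Fin 3 => ℝ) 2) with hedef
  have hmp : MeasurePreserving e volume volume :=
    ((MeasurePreserving.id (volume : Measure ℝ)).prod (volume_preserving_finTwoArrow ℝ)).comp
      (volume_preserving_piFinSuccAbove (fun _ : Fin 3 => ℝ) 2)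
  have hAe : {y : Fin 3 → ℝ | y 2 ≤ 1 ∧ -1 - y 2 ≤ y 0 ∧ y 0 ≤ 1 + y 2 ∧
      -1 - y 2 ≤ y 1 ∧ y 1 ≤ 1 + y 2 ∧ -(1 + y 2) ≤ y 0 + y 1} = e ⁻¹' B := by
    ext y
    have he : e y = (y 2, (y 0, y 1)) := rfl
    simp only [mem_preimage, he, hBdef, mem_setOf_eq]
  rw [hAe, hmp.measure_preimage hB.nullMeasurableSet]
  -- Step 3: Fubini.
  rw [Measure.volume_eq_prod, Measure.prod_apply hB]
  have hslice : ∀ t : ℝ, (volume : Measure (ℝ × ℝ)) (Prod.mk t ⁻¹' B) =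
      (Icc (-1 : ℝ) 1).indicator (fun t => ENNReal.ofReal (7 * (1 + t) ^ 2 / 2)) t := by
    intro t
    have : Prod.mk t ⁻¹' B = {q : ℝ × ℝ | t ≤ 1 ∧ -1 - t ≤ q.1 ∧ q.1 ≤ 1 + t ∧
        -1 - t ≤ q.2 ∧ q.2 ≤ 1 + t ∧ -(1 + t) ≤ q.1 + q.2} := rfl
    rw [this, slice2]
  simp only [hslice]
  rw [lintegral_indicator measurableSet_Icc, outer1d]
end

section
/- Let v₁, v₂, v₃, v₄ ∈ ℤ² be four points in convex position (no vᵢ lies in the convex hull of the other three, and Q = conv{v₁,v₂,v₃,v₄} is two-dimensional) such that Q ∩ ℤ² = {v₁,v₂,v₃,v₄}. Then Q is unimodularly equivalent to the standard square conv{(0,0),(1,0),(1,1),(0,1)}. -/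
/-- The inclusion of lattice points `ℤ² ⊆ ℝ²` (coordinatewise coercion). -/
def toReal2 (v : Fin 2 → ℤ) : Fin 2 → ℝ := fun i => (v i : ℝ)

/-- The affine unimodular map `x ↦ A x + b` of `ℝ²` determined by an integer matrix `A`
and an integer vector `b`. -/
def affineUnimodularMap (A : Matrix (Fin 2) (Fin 2) ℤ) (b : Fin 2 → ℤ) (x : Fin 2 → ℝ) :
    Fin 2 → ℝ :=
  (A.map (Int.cast : ℤ → ℝ)).mulVec x + toReal2 b

/-! Each triangle spanned by three of the vertices is non-degenerate (by convex position) and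
contains no lattice point besides its vertices, so its edge vectors `u, w` have determinant `±1`:
otherwise some lattice point lies outside `ℤu + ℤw`, and reducing it modulo `ℤu + ℤw` gives a
lattice point `αu + βw ≠ 0` with `α, β ∈ [0, 1)`, which either lies in the triangle or does after
reflection through the midpoint of the edge opposite to the common vertex.

With `u = v₂ - v₁`, `w = v₃ - v₁`, `z = v₄ - v₁`, Cramer's rule and the four unit determinants
force `z = ±u ± w`, and `z = -u - w` would give the fourth triangle determinant `±3`. In the
remaining cases the quadrilateral is a parallelogram with unimodular edge vectors, and the inverse
of its edge matrix maps it onto the unit square. -/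

def det2 {R : Type*} [CommRing R] (u w : Fin 2 → R) : R := u 0 * w 1 - u 1 * w 0

section ConvexGeometry

variable {E : Type*} [AddCommGroup E] [Module ℝ E]

theorem add_smul_sub_add_smul_sub_mem_convexHull (a b c : E) {α β : ℝ} (hα : 0 ≤ α)
    (hβ : 0 ≤ β) (hαβ : α + β ≤ 1) :
    a + α • (b - a) + β • (c - a) ∈ convexHull ℝ {a, b, c} := by
  have h := (convex_convexHull ℝ ({a, b, c} : Set E)).sum_mem (t := Finset.univ)
    (w := ![1 - α - β, α, β]) (z := ![a, b, c])
    (by intro i _; fin_cases i; exacts [by change 0 ≤ 1 - α - β; linarith, hα, hβ])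
    (by rw [Fin.sum_univ_three]; change 1 - α - β + α + β = 1; ring)
    (by intro i _; fin_cases i <;> apply subset_convexHull <;> simp)
  rw [Fin.sum_univ_three] at h
  convert h using 1
  change _ = (1 - α - β) • a + α • b + β • c
  module

theorem Collinear.mem_convexHull_pair {a b c : E} (h : Collinear ℝ {a, b, c}) :
    a ∈ convexHull ℝ {b, c} ∨ b ∈ convexHull ℝ {a, c} ∨ c ∈ convexHull ℝ {a, b} := by
  simp only [convexHull_pair, mem_segment_iff_wbtw]
  rcases h.wbtw_or_wbtw_or_wbtw with h | h | h
  · exact Or.inr (Or.inl h)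
  · exact Or.inr (Or.inr h.symm)
  · exact Or.inl h.symm

theorem LinearIndependent.coords_of_mem_vertices {a b c : E}
    (hli : LinearIndependent ℝ ![b - a, c - a]) {α β : ℝ}
    (h : a + α • (b - a) + β • (c - a) ∈ ({a, b, c} : Set E)) :
    (α = 0 ∧ β = 0) ∨ (α = 1 ∧ β = 0) ∨ (α = 0 ∧ β = 1) := by
  rw [LinearIndependent.pair_iff] at hli
  obtain h | h | h : _ = a ∨ _ = b ∨ _ = c := h
  · exact Or.inl (hli α β (by linear_combination (norm := module) h))
  · obtain ⟨hα, hβ⟩ := hli (α - 1) β (by linear_combination (norm := module) h)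
    exact Or.inr (Or.inl ⟨by linarith, hβ⟩)
  · obtain ⟨hα, hβ⟩ := hli α (β - 1) (by linear_combination (norm := module) h)
    exact Or.inr (Or.inr ⟨hα, by linarith⟩)

end ConvexGeometry

theorem det2_smul_eq_det2_smul_add_det2_smul {R : Type*} [CommRing R] (u w z : Fin 2 → R) :
    det2 u w • z = det2 z w • u + det2 u z • w := by
  ext i
  fin_cases i <;> simp only [det2, Fin.zero_eta, Fin.mk_one, Pi.add_apply, Pi.smul_apply,
    smul_eq_mul] <;> ring

theorem linearIndependent_pair_iff_det2_ne_zero {K : Type*} [Field K] (u w : Fin 2 → K) :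
    LinearIndependent K ![u, w] ↔ det2 u w ≠ 0 := by
  have := Matrix.linearIndependent_rows_iff_isUnit (A := Matrix.of ![u, w])
  rw [Matrix.isUnit_iff_isUnit_det, isUnit_iff_ne_zero, Matrix.det_fin_two] at this
  exact this

theorem collinear_of_det2_eq_zero {a b c : Fin 2 → ℝ} (h : det2 (b - a) (c - a) = 0) :
    Collinear ℝ {a, b, c} := by
  have hdep := mt (linearIndependent_pair_iff_det2_ne_zero (b - a) (c - a)).1 (not_not.2 h)
  rw [LinearIndependent.pair_iff] at hdep
  push Not at hdep
  obtain ⟨s, t, hst, hne⟩ := hdep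
  by_cases ht : t = 0
  · have hs : s ≠ 0 := fun hs => hne hs ht
    have hba : b = a := by
      simpa [ht, hs, sub_eq_zero] using hst
    simp [hba, collinear_pair]
  · have hc : c ∈ line[ℝ, a, b] := by
      have hca : c - a = (-s / t) • (b - a) := calc
        c - a = t⁻¹ • (t • (c - a)) := by rw [smul_smul, inv_mul_cancel₀ ht, one_smul]
        _ = (-s / t) • (b - a) := by rw [eq_neg_of_add_eq_zero_right hst]; module
      convert AffineMap.lineMap_mem_affineSpan_pair (-s / t) a b using 1
      rw [AffineMap.lineMap_apply_module', ← hca, sub_add_cancel]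
    have := collinear_insert_of_mem_affineSpan_pair hc
    rwa [Set.insert_comm, Set.pair_comm] at this

theorem toReal2_injective : Function.Injective toReal2 := fun _ _ h =>
  funext fun i => Int.cast_injective (congrFun h i)

@[simp] theorem toReal2_add (p q : Fin 2 → ℤ) : toReal2 (p + q) = toReal2 p + toReal2 q := by
  funext i; simp [toReal2]

@[simp] theorem toReal2_sub (p q : Fin 2 → ℤ) : toReal2 (p - q) = toReal2 p - toReal2 q := by
  funext i; simp [toReal2]

@[simp] theorem toReal2_zsmul (k : ℤ) (p : Fin 2 → ℤ) :
    toReal2 (k • p) = (k : ℝ) • toReal2 p := by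
  funext i; simp [toReal2]

@[simp] theorem toReal2_vecCons (x y : ℤ) : toReal2 ![x, y] = ![(x : ℝ), y] := by
  funext i; fin_cases i <;> rfl

@[simp] theorem det2_toReal2 (u w : Fin 2 → ℤ) : det2 (toReal2 u) (toReal2 w) = det2 u w := by
  simp [det2, toReal2]

theorem exists_ne_zsmul_add_zsmul_of_not_isUnit_det2 {u w : Fin 2 → ℤ} (hu : ¬IsUnit (det2 u w)) :
    ∃ x : Fin 2 → ℤ, ∀ s t : ℤ, x ≠ s • u + t • w := by
  by_contra! h
  obtain ⟨s₀, t₀, h₀⟩ := h ![1, 0]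
  obtain ⟨s₁, t₁, h₁⟩ := h ![0, 1]
  refine hu (IsUnit.of_mul_eq_one (s₀ * t₁ - t₀ * s₁) ?_)
  have : det2 (![1, 0] : Fin 2 → ℤ) ![0, 1] = 1 := by simp [det2]
  rw [h₀, h₁] at this
  simp only [det2, Pi.add_apply, Pi.smul_apply, smul_eq_mul] at this ⊢
  linear_combination this

theorem exists_lattice_point_mem_half_open_parallelogram {u w : Fin 2 → ℤ}
    (hd : det2 u w ≠ 0) (hu : ¬IsUnit (det2 u w)) :
    ∃ (x : Fin 2 → ℤ) (α β : ℝ), 0 ≤ α ∧ α < 1 ∧ 0 ≤ β ∧ β < 1 ∧ (α ≠ 0 ∨ β ≠ 0) ∧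
      toReal2 x = α • toReal2 u + β • toReal2 w := by
  obtain ⟨y, hy⟩ := exists_ne_zsmul_add_zsmul_of_not_isUnit_det2 hu
  have hdR : ((det2 u w : ℤ) : ℝ) ≠ 0 := Int.cast_ne_zero.2 hd
  set α : ℝ := ((det2 y w : ℤ) : ℝ) / ((det2 u w : ℤ) : ℝ)
  set β : ℝ := ((det2 u y : ℤ) : ℝ) / ((det2 u w : ℤ) : ℝ)
  have hcoords : toReal2 y = α • toReal2 u + β • toReal2 w := by
    have h := det2_smul_eq_det2_smul_add_det2_smul (toReal2 u) (toReal2 w) (toReal2 y)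
    simp only [det2_toReal2] at h
    rw [← inv_smul_smul₀ hdR (toReal2 y), h]
    simp only [α, β, smul_add, smul_smul]
    congr 2 <;> ring
  refine ⟨y - ⌊α⌋ • u - ⌊β⌋ • w, Int.fract α, Int.fract β, Int.fract_nonneg α,
    Int.fract_lt_one α, Int.fract_nonneg β, Int.fract_lt_one β, ?_, ?_⟩
  · by_contra! h
    refine hy ⌊α⌋ ⌊β⌋ (toReal2_injective ?_)
    simp only [Int.fract, sub_eq_zero] at h
    rw [hcoords, toReal2_add, toReal2_zsmul, toReal2_zsmul, ← h.1, ← h.2]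
  · simp only [toReal2_sub, toReal2_zsmul, hcoords, Int.fract]
    module

theorem exists_lattice_point_mem_convexHull_notMem_vertices (a b c : Fin 2 → ℤ)
    (hd : det2 (b - a) (c - a) ≠ 0) (hu : ¬IsUnit (det2 (b - a) (c - a))) :
    ∃ p : Fin 2 → ℤ, toReal2 p ∈ convexHull ℝ {toReal2 a, toReal2 b, toReal2 c} ∧
      toReal2 p ∉ ({toReal2 a, toReal2 b, toReal2 c} : Set (Fin 2 → ℝ)) := by
  obtain ⟨x, α, β, hα₀, hα₁, hβ₀, hβ₁, hαβ, hx⟩ :=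
    exists_lattice_point_mem_half_open_parallelogram hd hu
  have hli : LinearIndependent ℝ ![toReal2 b - toReal2 a, toReal2 c - toReal2 a] := by
    rw [linearIndependent_pair_iff_det2_ne_zero, ← toReal2_sub, ← toReal2_sub, det2_toReal2]
    exact_mod_cast hd
  rw [toReal2_sub, toReal2_sub] at hx
  rcases le_or_gt (α + β) 1 with hle | hgt
  · have hp : toReal2 (a + x) = toReal2 a + α • (toReal2 b - toReal2 a) +
        β • (toReal2 c - toReal2 a) := by
      rw [toReal2_add, hx, add_assoc]
    refine ⟨a + x, hp ▸ add_smul_sub_add_smul_sub_mem_convexHull _ _ _ hα₀ hβ₀ hle, ?_⟩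
    rw [hp]
    intro h
    rcases hli.coords_of_mem_vertices h with ⟨h₁, h₂⟩ | ⟨h₁, h₂⟩ | ⟨h₁, h₂⟩
    · exact hαβ.elim (· h₁) (· h₂)
    · linarith
    · linarith
  · have hp : toReal2 (b + c - a - x) = toReal2 a + (1 - α) • (toReal2 b - toReal2 a) +
        (1 - β) • (toReal2 c - toReal2 a) := by
      rw [toReal2_sub, toReal2_sub, toReal2_add, hx]
      module
    refine ⟨b + c - a - x, hp ▸ add_smul_sub_add_smul_sub_mem_convexHull _ _ _
      (by linarith) (by linarith) (by linarith), ?_⟩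
    rw [hp]
    intro h
    rcases hli.coords_of_mem_vertices h with ⟨h₁, h₂⟩ | ⟨h₁, h₂⟩ | ⟨h₁, h₂⟩ <;> linarith

theorem isUnit_det2_of_empty_triangle (a b c : Fin 2 → ℤ)
    (ha : toReal2 a ∉ convexHull ℝ {toReal2 b, toReal2 c})
    (hb : toReal2 b ∉ convexHull ℝ {toReal2 a, toReal2 c})
    (hc : toReal2 c ∉ convexHull ℝ {toReal2 a, toReal2 b})
    (hempty : ∀ p : Fin 2 → ℤ, toReal2 p ∈ convexHull ℝ {toReal2 a, toReal2 b, toReal2 c} →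
      p = a ∨ p = b ∨ p = c) :
    IsUnit (det2 (b - a) (c - a)) := by
  have hd : det2 (b - a) (c - a) ≠ 0 := by
    intro h
    have hcol : Collinear ℝ {toReal2 a, toReal2 b, toReal2 c} := by
      apply collinear_of_det2_eq_zero
      rw [← toReal2_sub, ← toReal2_sub, det2_toReal2, h, Int.cast_zero]
    rcases hcol.mem_convexHull_pair with h | h | h <;> contradiction
  by_contra hu
  obtain ⟨p, hp, hpv⟩ := exists_lattice_point_mem_convexHull_notMem_vertices a b c hd hu
  rcases hempty p hp with rfl | rfl | rfl <;> simp at hpv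

theorem eq_add_or_eq_sub_or_eq_sub_of_isUnit_det2 {u w z : Fin 2 → ℤ}
    (h₁ : IsUnit (det2 u w)) (h₂ : IsUnit (det2 u z)) (h₃ : IsUnit (det2 w z))
    (h₄ : IsUnit (det2 (w - u) (z - u))) :
    z = u + w ∨ z = u - w ∨ z = w - u := by
  set x := -(det2 u w * det2 w z)
  set y := det2 u w * det2 u z
  have hsq : det2 u w * det2 u w = 1 := Int.isUnit_mul_self h₁
  have hz : z = x • u + y • w := calc
    z = (det2 u w * det2 u w) • z := by rw [hsq, one_smul]
    _ = x • u + y • w := by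
      rw [mul_smul, det2_smul_eq_det2_smul_add_det2_smul u w z]
      simp only [x, y, det2]
      module
  have hx : x = 1 ∨ x = -1 := Int.isUnit_iff.1 (h₁.mul h₃).neg
  have hy : y = 1 ∨ y = -1 := Int.isUnit_iff.1 (h₁.mul h₂)
  have hxy : ¬(x = -1 ∧ y = -1) := by
    rintro ⟨hx, hy⟩
    have h := Int.isUnit_iff.1 (h₁.mul h₄)
    have : det2 u w * det2 (w - u) (z - u) = 3 := by
      simp only [x, y, det2, Pi.sub_apply] at hx hy hsq ⊢
      linear_combination -hx + hsq - hy
    omega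
  rcases hx with hx | hx <;> rcases hy with hy | hy <;> rw [hx, hy] at hz
  · exact Or.inl (by rw [hz, one_smul, one_smul])
  · exact Or.inr (Or.inl (by rw [hz]; module))
  · exact Or.inr (Or.inr (by rw [hz]; module))
  · exact absurd ⟨hx, hy⟩ hxy

section UnimodularMap

open Matrix

theorem affineUnimodularMap_toReal2 (A : Matrix (Fin 2) (Fin 2) ℤ) (t p : Fin 2 → ℤ) :
    affineUnimodularMap A t (toReal2 p) = toReal2 (A *ᵥ p + t) := by
  funext i
  fin_cases i <;> simp [affineUnimodularMap, toReal2]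

theorem image_affineUnimodularMap_convexHull (A : Matrix (Fin 2) (Fin 2) ℤ) (t : Fin 2 → ℤ)
    (s : Set (Fin 2 → ℝ)) :
    affineUnimodularMap A t '' convexHull ℝ s = convexHull ℝ (affineUnimodularMap A t '' s) := by
  let f : (Fin 2 → ℝ) →ᵃ[ℝ] (Fin 2 → ℝ) :=
    (Matrix.toLin' (A.map (Int.cast : ℤ → ℝ))).toAffineMap + AffineMap.const ℝ _ (toReal2 t)
  have hf : affineUnimodularMap A t = f := by
    funext x
    simp [f, affineUnimodularMap]
  rw [hf, f.image_convexHull]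

theorem exists_affineUnimodularMap_image_eq_square (a b c d : Fin 2 → ℤ)
    (h : IsUnit (det2 (b - a) (c - a))) (hd : d = b + c - a) :
    ∃ (A : Matrix (Fin 2) (Fin 2) ℤ) (t : Fin 2 → ℤ), (A.det = 1 ∨ A.det = -1) ∧
      affineUnimodularMap A t ''
          convexHull ℝ ({toReal2 a, toReal2 b, toReal2 c, toReal2 d} : Set (Fin 2 → ℝ)) =
        convexHull ℝ ({![0, 0], ![1, 0], ![1, 1], ![0, 1]} : Set (Fin 2 → ℝ)) := by
  obtain ⟨u, rfl⟩ : ∃ u, b = u + a := ⟨b - a, (sub_add_cancel b a).symm⟩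
  obtain ⟨w, rfl⟩ : ∃ w, c = w + a := ⟨c - a, (sub_add_cancel c a).symm⟩
  obtain rfl : d = (u + w) + a := by rw [hd]; abel
  rw [add_sub_cancel_right, add_sub_cancel_right] at h
  set ε := det2 u w
  have hε_def : ε = u 0 * w 1 - u 1 * w 0 := rfl
  have hε : ε * ε = 1 := Int.isUnit_mul_self h
  -- `A` is the inverse of the matrix with columns `u` and `w`
  set A : Matrix (Fin 2) (Fin 2) ℤ := !![ε * w 1, -(ε * w 0); -(ε * u 1), ε * u 0]
  have hA : ∀ p, A *ᵥ (p + a) + -(A *ᵥ a) = A *ᵥ p := fun p => by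
    rw [mulVec_add, add_neg_cancel_right]
  have hAu : A *ᵥ u = ![1, 0] := by
    rw [mulVec_fin_two]
    simp only [A, of_apply, cons_val_zero, cons_val_one]
    exact vec2_eq (by linear_combination hε - ε * hε_def) (by ring)
  have hAw : A *ᵥ w = ![0, 1] := by
    rw [mulVec_fin_two]
    simp only [A, of_apply, cons_val_zero, cons_val_one]
    exact vec2_eq (by ring) (by linear_combination hε - ε * hε_def)
  refine ⟨A, -(A *ᵥ a), ?_, ?_⟩
  · have hdet : A.det = ε := by
      rw [det_fin_two_of]
      linear_combination ε * hε - ε ^ 2 * hε_def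
    exact hdet ▸ Int.isUnit_iff.1 h
  · rw [image_affineUnimodularMap_convexHull]
    simp only [Set.image_insert_eq, Set.image_singleton, affineUnimodularMap_toReal2,
      add_neg_cancel, hA]
    have h0 : (0 : Fin 2 → ℤ) = ![0, 0] := by ext i; fin_cases i <;> rfl
    rw [mulVec_add, hAu, hAw, h0, Set.pair_comm]
    norm_num

end UnimodularMap

def IsEmptyLatticeQuad (a b c d : Fin 2 → ℤ) : Prop :=
  toReal2 a ∉ convexHull ℝ {toReal2 b, toReal2 c, toReal2 d} ∧
  toReal2 b ∉ convexHull ℝ {toReal2 a, toReal2 c, toReal2 d} ∧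
  toReal2 c ∉ convexHull ℝ {toReal2 a, toReal2 b, toReal2 d} ∧
  toReal2 d ∉ convexHull ℝ {toReal2 a, toReal2 b, toReal2 c} ∧
  ∀ p : Fin 2 → ℤ, toReal2 p ∈ convexHull ℝ {toReal2 a, toReal2 b, toReal2 c, toReal2 d} →
    p = a ∨ p = b ∨ p = c ∨ p = d

namespace IsEmptyLatticeQuad

variable {a b c d : Fin 2 → ℤ}

theorem swap₁₂ (h : IsEmptyLatticeQuad a b c d) : IsEmptyLatticeQuad b a c d := by
  obtain ⟨ha, hb, hc, hd, hlat⟩ := h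
  refine ⟨hb, ha, by rwa [Set.insert_comm], by rwa [Set.insert_comm], fun p hp => ?_⟩
  rw [Set.insert_comm] at hp
  rcases hlat p hp with h | h | h | h <;> simp [h]

theorem swap₂₃ (h : IsEmptyLatticeQuad a b c d) : IsEmptyLatticeQuad a c b d := by
  obtain ⟨ha, hb, hc, hd, hlat⟩ := h
  refine ⟨by rwa [Set.insert_comm], hc, hb, by rwa [Set.pair_comm], fun p hp => ?_⟩
  rw [Set.insert_comm (toReal2 c)] at hp
  rcases hlat p hp with h | h | h | h <;> simp [h]

theorem swap₃₄ (h : IsEmptyLatticeQuad a b c d) : IsEmptyLatticeQuad a b d c := by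
  obtain ⟨ha, hb, hc, hd, hlat⟩ := h
  refine ⟨by rwa [Set.pair_comm], by rwa [Set.pair_comm], hd, hc, fun p hp => ?_⟩
  rw [Set.pair_comm] at hp
  rcases hlat p hp with h | h | h | h <;> simp [h]

theorem isUnit_det2 (h : IsEmptyLatticeQuad a b c d) : IsUnit (det2 (b - a) (c - a)) := by
  obtain ⟨ha, hb, hc, hd, hlat⟩ := h
  refine isUnit_det2_of_empty_triangle a b c (fun h => ha (convexHull_mono ?_ h))
    (fun h => hb (convexHull_mono ?_ h)) (fun h => hc (convexHull_mono ?_ h)) fun p hp => ?_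
  iterate 3 simp [Set.insert_subset_iff]
  obtain h | h | h | rfl := hlat p (convexHull_mono (by simp [Set.insert_subset_iff]) hp)
  exacts [Or.inl h, Or.inr (Or.inl h), Or.inr (Or.inr h), absurd hp hd]

end IsEmptyLatticeQuad

theorem lattice_quadrilateral_with_no_extra_lattice_points_is_standard_square_general
    (v₁ v₂ v₃ v₄ : Fin 2 → ℤ)
    (hconv₁ : toReal2 v₁ ∉ convexHull ℝ ({toReal2 v₂, toReal2 v₃, toReal2 v₄} : Set (Fin 2 → ℝ)))
    (hconv₂ : toReal2 v₂ ∉ convexHull ℝ ({toReal2 v₁, toReal2 v₃, toReal2 v₄} : Set (Fin 2 → ℝ)))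
    (hconv₃ : toReal2 v₃ ∉ convexHull ℝ ({toReal2 v₁, toReal2 v₂, toReal2 v₄} : Set (Fin 2 → ℝ)))
    (hconv₄ : toReal2 v₄ ∉ convexHull ℝ ({toReal2 v₁, toReal2 v₂, toReal2 v₃} : Set (Fin 2 → ℝ)))
    (hlat : ∀ p : Fin 2 → ℤ,
      toReal2 p ∈
          convexHull ℝ ({toReal2 v₁, toReal2 v₂, toReal2 v₃, toReal2 v₄} : Set (Fin 2 → ℝ)) ↔
        p = v₁ ∨ p = v₂ ∨ p = v₃ ∨ p = v₄) :
    ∃ (A : Matrix (Fin 2) (Fin 2) ℤ) (b : Fin 2 → ℤ),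
      (A.det = 1 ∨ A.det = -1) ∧
      affineUnimodularMap A b ''
          convexHull ℝ ({toReal2 v₁, toReal2 v₂, toReal2 v₃, toReal2 v₄} : Set (Fin 2 → ℝ)) =
        convexHull ℝ ({![0, 0], ![1, 0], ![1, 1], ![0, 1]} : Set (Fin 2 → ℝ)) := by
  have hQ : IsEmptyLatticeQuad v₁ v₂ v₃ v₄ :=
    ⟨hconv₁, hconv₂, hconv₃, hconv₄, fun p hp => (hlat p).1 hp⟩
  have h₂₃₄ := hQ.swap₁₂.swap₂₃.swap₃₄.isUnit_det2
  rw [← sub_sub_sub_cancel_right v₃ v₂ v₁, ← sub_sub_sub_cancel_right v₄ v₂ v₁] at h₂₃₄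
  rcases eq_add_or_eq_sub_or_eq_sub_of_isUnit_det2 hQ.isUnit_det2 hQ.swap₃₄.isUnit_det2
    hQ.swap₂₃.swap₃₄.isUnit_det2 h₂₃₄ with h | h | h
  · exact exists_affineUnimodularMap_image_eq_square v₁ v₂ v₃ v₄ hQ.isUnit_det2
      (by rw [← sub_add_cancel v₄ v₁, h]; abel)
  · rw [Set.insert_comm (toReal2 v₂), Set.pair_comm (toReal2 v₂)]
    exact exists_affineUnimodularMap_image_eq_square v₁ v₃ v₄ v₂ hQ.swap₂₃.swap₃₄.isUnit_det2
      (by rw [← sub_add_cancel v₄ v₁, h]; abel)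
  · rw [Set.pair_comm (toReal2 v₃)]
    exact exists_affineUnimodularMap_image_eq_square v₁ v₂ v₄ v₃ hQ.swap₃₄.isUnit_det2
      (by rw [← sub_add_cancel v₄ v₁, h]; abel)

/-- Four lattice points in convex position (none in the convex hull of the other three,
spanning a two-dimensional `Q = conv{v₁,v₂,v₃,v₄}`) such that the only lattice points of
`Q` are the `vᵢ` form a quadrilateral unimodularly equivalent to the standard square
`conv{(0,0),(1,0),(1,1),(0,1)}`. -/
theorem lattice_quadrilateral_with_no_extra_lattice_points_is_standard_square
    (v₁ v₂ v₃ v₄ : Fin 2 → ℤ)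
    (hconv₁ : toReal2 v₁ ∉ convexHull ℝ ({toReal2 v₂, toReal2 v₃, toReal2 v₄} : Set (Fin 2 → ℝ)))
    (hconv₂ : toReal2 v₂ ∉ convexHull ℝ ({toReal2 v₁, toReal2 v₃, toReal2 v₄} : Set (Fin 2 → ℝ)))
    (hconv₃ : toReal2 v₃ ∉ convexHull ℝ ({toReal2 v₁, toReal2 v₂, toReal2 v₄} : Set (Fin 2 → ℝ)))
    (hconv₄ : toReal2 v₄ ∉ convexHull ℝ ({toReal2 v₁, toReal2 v₂, toReal2 v₃} : Set (Fin 2 → ℝ)))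
    (hdim : ¬ Collinear ℝ ({toReal2 v₁, toReal2 v₂, toReal2 v₃, toReal2 v₄} : Set (Fin 2 → ℝ)))
    (hlat : ∀ p : Fin 2 → ℤ,
      toReal2 p ∈
          convexHull ℝ ({toReal2 v₁, toReal2 v₂, toReal2 v₃, toReal2 v₄} : Set (Fin 2 → ℝ)) ↔
        p = v₁ ∨ p = v₂ ∨ p = v₃ ∨ p = v₄) :
    ∃ (A : Matrix (Fin 2) (Fin 2) ℤ) (b : Fin 2 → ℤ),
      (A.det = 1 ∨ A.det = -1) ∧
      affineUnimodularMap A b ''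
          convexHull ℝ ({toReal2 v₁, toReal2 v₂, toReal2 v₃, toReal2 v₄} : Set (Fin 2 → ℝ)) =
        convexHull ℝ ({![0, 0], ![1, 0], ![1, 1], ![0, 1]} : Set (Fin 2 → ℝ)) :=
  lattice_quadrilateral_with_no_extra_lattice_points_is_standard_square_general v₁ v₂ v₃ v₄ hconv₁
    hconv₂ hconv₃ hconv₄ hlat
end
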